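/- In the number field model, for every κ ∈ K ∪ {∞} one has T^κ = π_Δ(V^κ); that is, the subtorus T^κ is exactly the image in X² of the d-dimensional linear subspace V^κ of (ℝ^{r₁}⊕ℂ^{r₂})². -/

import Mathlib

noncomputable section

/-- The ambient space `ℝ^{r₁} ⊕ ℂ^{r₂}`. -/
abbrev Amb (r₁ r₂ : ℕ) : Type := (Fin r₁ → ℝ) × (Fin r₂ → ℂ)

/-- The multiplicative action of `θ ∈ K` on the ambient space, acting on the `i`-th
coordinate by multiplication by `σ_i(θ)`. -/
def mulK {K : Type} [Field K] {r₁ r₂ : ℕ} (σR : Fin r₁ → (K →+* ℝ))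
    (σC : Fin r₂ → (K →+* ℂ)) (θ : K) (x : Amb r₁ r₂) : Amb r₁ r₂ :=
  (fun i => σR i θ * x.1 i, fun j => σC j θ * x.2 j)

/-- The embedding `σ : K → ℝ^{r₁} ⊕ ℂ^{r₂}`. -/
def embK {K : Type} [Field K] {r₁ r₂ : ℕ} (σR : Fin r₁ → (K →+* ℝ))
    (σC : Fin r₂ → (K →+* ℂ)) (θ : K) : Amb r₁ r₂ :=
  (fun i => σR i θ, fun j => σC j θ)

/-- The image in `K` of a unit of the ring of integers. -/
def unitToK {K : Type} [Field K] [NumberField K] (u : (NumberField.RingOfIntegers K)ˣ) : K :=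
  algebraMap (NumberField.RingOfIntegers K) K (u : NumberField.RingOfIntegers K)

/-- The pairing `⟨ξ,x⟩ = Σ ξᵢxᵢ + Σ 2 Re(ξⱼxⱼ)` on the ambient space. -/
def pairAmb {r₁ r₂ : ℕ} (ξ x : Amb r₁ r₂) : ℝ :=
  (∑ i, ξ.1 i * x.1 i) + ∑ j, 2 * (ξ.2 j * x.2 j).re

/-- `σ(𝒪_K)`, as an additive subgroup of the ambient space. -/
def ringLat {K : Type} [Field K] [NumberField K] {r₁ r₂ : ℕ} (σR : Fin r₁ → (K →+* ℝ))
    (σC : Fin r₂ → (K →+* ℂ)) : AddSubgroup (Amb r₁ r₂) :=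
  AddSubgroup.closure
    (Set.range fun a : NumberField.RingOfIntegers K =>
      embK σR σC (algebraMap (NumberField.RingOfIntegers K) K a))

/-- The dual lattice `X̂` of `X = (ℝ^{r₁}⊕ℂ^{r₂})/Γ`. -/
def hatX {r₁ r₂ : ℕ} (Γ : AddSubgroup (Amb r₁ r₂)) : Set (Amb r₁ r₂) :=
  {ξ | ∀ γ ∈ Γ, ∃ m : ℤ, pairAmb ξ γ = (m : ℝ)}

/-- `(X̂²)^κ` for `κ ∈ K ∪ {∞}`, where `∞` is encoded as `none`. -/
def hatSq {K : Type} [Field K] {r₁ r₂ : ℕ} (σR : Fin r₁ → (K →+* ℝ))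
    (σC : Fin r₂ → (K →+* ℂ)) (Γ : AddSubgroup (Amb r₁ r₂)) :
    Option K → Set (Amb r₁ r₂ × Amb r₁ r₂)
  | some κ => {ξ | ξ.1 ∈ hatX Γ ∧ ξ.2 ∈ hatX Γ ∧ ξ.1 + mulK σR σC κ ξ.2 = 0}
  | none => {ξ | ξ.1 ∈ hatX Γ ∧ ξ.2 = 0}

/-- The subtorus `T^κ ⊆ X²`, defined as the annihilator of `(X̂²)^κ`. -/
def Tk {K : Type} [Field K] {r₁ r₂ : ℕ} (σR : Fin r₁ → (K →+* ℝ))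
    (σC : Fin r₂ → (K →+* ℂ)) (Γ : AddSubgroup (Amb r₁ r₂)) (κ : Option K) :
    Set ((Amb r₁ r₂ × Amb r₁ r₂) ⧸ Γ.prod Γ) :=
  {x | ∃ x' : Amb r₁ r₂ × Amb r₁ r₂,
    (QuotientAddGroup.mk x' : (Amb r₁ r₂ × Amb r₁ r₂) ⧸ Γ.prod Γ) = x ∧
    ∀ ξ ∈ hatSq σR σC Γ κ, ∃ m : ℤ, pairAmb ξ.1 x'.1 + pairAmb ξ.2 x'.2 = (m : ℝ)}

/-- The diagonal multiplicative action of `θ ∈ K` on `(ℝ^{r₁}⊕ℂ^{r₂})²`. -/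
def mulKsq {K : Type} [Field K] {r₁ r₂ : ℕ} (σR : Fin r₁ → (K →+* ℝ))
    (σC : Fin r₂ → (K →+* ℂ)) (θ : K) (x : Amb r₁ r₂ × Amb r₁ r₂) :
    Amb r₁ r₂ × Amb r₁ r₂ :=
  (mulK σR σC θ x.1, mulK σR σC θ x.2)

/-- The complex-valued `i`-th embedding, for `i` in the index set `I = Fin r₁ ⊕ Fin r₂`. -/
def embC {K : Type} [Field K] {r₁ r₂ : ℕ} (σR : Fin r₁ → (K →+* ℝ))
    (σC : Fin r₂ → (K →+* ℂ)) : Fin r₁ ⊕ Fin r₂ → K → ℂ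
  | Sum.inl i => fun θ => (σR i θ : ℂ)
  | Sum.inr j => fun θ => σC j θ

/-- `λ_i(n) = log |σ_i(ζ^n)|`. -/
def lam {K : Type} [Field K] [NumberField K] {r r₁ r₂ : ℕ} (σR : Fin r₁ → (K →+* ℝ))
    (σC : Fin r₂ → (K →+* ℂ)) (ζ : (Fin r → ℤ) → (NumberField.RingOfIntegers K)ˣ)
    (i : Fin r₁ ⊕ Fin r₂) (n : Fin r → ℤ) : ℝ :=
  Real.log ‖embC σR σC i (unitToK (ζ n))‖

/-- The subspace `V^κ` of `(ℝ^{r₁}⊕ℂ^{r₂})²`, for `κ ∈ K ∪ {∞}`. -/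
def Vk {K : Type} [Field K] {r₁ r₂ : ℕ} (σR : Fin r₁ → (K →+* ℝ))
    (σC : Fin r₂ → (K →+* ℂ)) : Option K → Set (Amb r₁ r₂ × Amb r₁ r₂)
  | some κ => {v | v.2 = mulK σR σC κ v.1}
  | none => {v | v.1 = 0}

/-- The coordinate subspace `V_i` of `ℝ^{r₁}⊕ℂ^{r₂}`. -/
def Vslice (r₁ r₂ : ℕ) : Fin r₁ ⊕ Fin r₂ → Set (Amb r₁ r₂)
  | Sum.inl i => {x | (∀ i', i' ≠ i → x.1 i' = 0) ∧ x.2 = 0}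
  | Sum.inr j => {x | x.1 = 0 ∧ ∀ j', j' ≠ j → x.2 j' = 0}

/-- `V_i^□ = V_i ⊕ V_i ⊆ (ℝ^{r₁}⊕ℂ^{r₂})²`. -/
def VsliceSq (r₁ r₂ : ℕ) (i : Fin r₁ ⊕ Fin r₂) : Set (Amb r₁ r₂ × Amb r₁ r₂) :=
  {v | v.1 ∈ Vslice r₁ r₂ i ∧ v.2 ∈ Vslice r₁ r₂ i}

/-- The image of a subset of `X²` under `ζ_Δ^n`. -/
def setAct {K : Type} [Field K] [NumberField K] {r r₁ r₂ : ℕ} (σR : Fin r₁ → (K →+* ℝ))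
    (σC : Fin r₂ → (K →+* ℂ)) (Γ : AddSubgroup (Amb r₁ r₂))
    (ζ : (Fin r → ℤ) → (NumberField.RingOfIntegers K)ˣ) (n : Fin r → ℤ)
    (S : Set ((Amb r₁ r₂ × Amb r₁ r₂) ⧸ Γ.prod Γ)) :
    Set ((Amb r₁ r₂ × Amb r₁ r₂) ⧸ Γ.prod Γ) :=
  {y | ∃ x' : Amb r₁ r₂ × Amb r₁ r₂,
    (QuotientAddGroup.mk x' : (Amb r₁ r₂ × Amb r₁ r₂) ⧸ Γ.prod Γ) ∈ S ∧
    y = QuotientAddGroup.mk (mulKsq σR σC (unitToK (ζ n)) x')}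

/-- A `d`-dimensional homogeneous `ζ_Δ`-invariant subset
`L = {ζ_Δ^n·z' : n ∈ ℤ^r, z' ∈ z + T^κ}`. -/
def homogSet {K : Type} [Field K] [NumberField K] {r r₁ r₂ : ℕ} (σR : Fin r₁ → (K →+* ℝ))
    (σC : Fin r₂ → (K →+* ℂ)) (Γ : AddSubgroup (Amb r₁ r₂))
    (ζ : (Fin r → ℤ) → (NumberField.RingOfIntegers K)ˣ)
    (z : (Amb r₁ r₂ × Amb r₁ r₂) ⧸ Γ.prod Γ) (κ : Option K) :
    Set ((Amb r₁ r₂ × Amb r₁ r₂) ⧸ Γ.prod Γ) :=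
  {y | ∃ (n : Fin r → ℤ) (x' : Amb r₁ r₂ × Amb r₁ r₂),
    (QuotientAddGroup.mk x' : (Amb r₁ r₂ × Amb r₁ r₂) ⧸ Γ.prod Γ) ∈ (z + ·) '' Tk σR σC Γ κ ∧
    y = QuotientAddGroup.mk (mulKsq σR σC (unitToK (ζ n)) x')}



/-!
`T^κ` is the image of the set `A^κ ⊆ (ℝ^{r₁}⊕ℂ^{r₂})²` of points pairing integrally with
`(X̂²)^κ`, and `V^κ ⊆ A^κ`; it remains to show `A^κ ⊆ V^κ + Γ²`. For `κ = ∞`, a point of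
`A^∞` has first coordinate in the double dual of `Γ`, which is `Γ` because `Γ` is a full lattice.
For `κ ∈ K`, `(X̂²)^κ` contains `(-κξ, ξ)` for every `ξ` in the dual of `M = Γ + κΓ`, so
`x ∈ A^κ` forces `x₂ - κx₁ = γ₁ + κγ₂ ∈ M`, and then `x ≡ (x₁ + γ₂, κ(x₁ + γ₂))` modulo `Γ²`.
Double duality applies to `M` because it is again a full lattice: `Γ` is commensurable with
`σ(𝒪_K)` and some integer multiple of `κ` is integral, so `cM ⊆ Γ` for some integer `c ≠ 0`.
-/

open LinearMap (BilinForm)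

section Lattice

variable {E : Type*} [NormedAddCommGroup E] [NormedSpace ℝ E]

lemma AddSubgroup.span_eq_top_of_compactSpace_quotient [FiniteDimensional ℝ E]
    (Γ : AddSubgroup E) [CompactSpace (E ⧸ Γ)] : Submodule.span ℝ (Γ : Set E) = ⊤ := by
  by_contra hne
  obtain ⟨f, hf0, hΓf⟩ := (Submodule.span ℝ (Γ : Set E)).exists_le_ker_of_lt_top
    (lt_top_iff_ne_top.mpr hne)
  have hfΓ : Γ ≤ f.toAddMonoidHom.ker := fun γ hγ => hΓf (Submodule.subset_span hγ)
  let F : E ⧸ Γ →+ ℝ := QuotientAddGroup.lift Γ f.toAddMonoidHom hfΓ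
  have hF : Continuous F := f.continuous_of_finiteDimensional.quotient_lift _
  have hF_surj : Function.Surjective F := fun s =>
    let ⟨x, hx⟩ := f.surjective hf0 s
    ⟨x, hx⟩
  exact noncompact_univ ℝ (hF_surj.range_eq ▸ isCompact_range hF)

lemma AddSubgroup.discreteTopology_of_zsmul_mem {Γ M : AddSubgroup E} [DiscreteTopology Γ]
    {c : ℤ} (hc : c ≠ 0) (h : ∀ m ∈ M, c • m ∈ Γ) : DiscreteTopology M :=
  .of_continuous_injective (f := fun m : M => (⟨c • (m : E), h m m.2⟩ : Γ)) (by fun_prop)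
    fun m m' hmm' => Subtype.ext <| smul_right_injective E (Int.cast_ne_zero.mpr hc : (c : ℝ) ≠ 0)
      (by simpa only [Int.cast_smul_eq_zsmul] using congrArg Subtype.val hmm')

lemma LinearMap.BilinForm.dualSubmodule_dualSubmodule_of_isZLattice [FiniteDimensional ℝ E]
    {B : BilinForm ℝ E} (hB : B.Nondegenerate) (hB' : B.IsSymm) (L : Submodule ℤ E)
    [DiscreteTopology L] [IsZLattice ℝ L] : B.dualSubmodule (B.dualSubmodule L) = L := by
  rw [← (Module.Free.chooseBasis ℤ L).ofZLatticeBasis_span ℝ]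
  exact B.dualSubmodule_dualSubmodule_of_basis hB hB' _

end Lattice

lemma AddMonoidHom.exists_zsmul_map_mem_of_relIndex_ne_zero {G : Type*} [AddCommGroup G]
    (f : G →+ G) {H L : AddSubgroup G} (hHL : H.relIndex L ≠ 0) (hLH : L.relIndex H ≠ 0)
    {b : ℤ} (hb : b ≠ 0) (hL : ∀ x ∈ L, b • f x ∈ L) :
    ∃ c : ℤ, c ≠ 0 ∧ ∀ γ ∈ H, c • f γ ∈ H := by
  refine ⟨H.relIndex L * b * L.relIndex H, by simp [hHL, hLH, hb], fun γ hγ => ?_⟩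
  have := H.nsmul_relIndex_mem (hL _ (L.nsmul_relIndex_mem hγ))
  rwa [map_nsmul, ← natCast_zsmul, ← natCast_zsmul, smul_smul, smul_smul] at this

open Pointwise in
lemma QuotientAddGroup.image_mk_eq_of_subset_add {G : Type*} [AddGroup G] {H : AddSubgroup G}
    {V A : Set G} (hVA : V ⊆ A) (hAV : A ⊆ V + H) :
    (QuotientAddGroup.mk '' A : Set (G ⧸ H)) = QuotientAddGroup.mk '' V := by
  refine (Set.image_mono hVA).antisymm' ?_
  rintro _ ⟨a, ha, rfl⟩
  obtain ⟨v, hv, h, hh, rfl⟩ := hAV ha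
  exact ⟨v, hv, (QuotientAddGroup.mk_add_of_mem v hh).symm⟩

section Pairing

variable {r₁ r₂ : ℕ}

def pairAmbForm : BilinForm ℝ (Amb r₁ r₂) :=
  LinearMap.mk₂ ℝ pairAmb
    (fun ξ ξ' x => by
      simp only [pairAmb, Prod.fst_add, Prod.snd_add, Pi.add_apply, add_mul, Complex.add_re,
        mul_add, Finset.sum_add_distrib]
      ring)
    (fun c ξ x => by
      simp only [pairAmb, Prod.smul_fst, Prod.smul_snd, Pi.smul_apply, smul_eq_mul,
        Complex.real_smul, mul_add, Finset.mul_sum, mul_assoc, Complex.re_ofReal_mul]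
      ring_nf)
    (fun ξ x x' => by
      simp only [pairAmb, Prod.fst_add, Prod.snd_add, Pi.add_apply, mul_add, Complex.add_re,
        Finset.sum_add_distrib]
      ring)
    (fun c ξ x => by
      simp only [pairAmb, Prod.smul_fst, Prod.smul_snd, Pi.smul_apply, smul_eq_mul,
        Complex.real_smul, mul_add, Finset.mul_sum, mul_left_comm _ (c : ℂ),
        Complex.re_ofReal_mul, mul_left_comm _ c])

@[simp] lemma pairAmbForm_apply (ξ x : Amb r₁ r₂) : pairAmbForm ξ x = pairAmb ξ x := rfl

lemma pairAmbForm_isSymm : (pairAmbForm (r₁ := r₁) (r₂ := r₂)).IsSymm :=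
  ⟨fun ξ x => by simp only [pairAmbForm_apply, pairAmb, mul_comm]⟩

/-- Pairing `ξ` with `(ξ.1, conj ξ.2)` gives `Σ ξᵢ² + 2 Σ |ξⱼ|²`. -/
lemma pairAmbForm_nondegenerate : (pairAmbForm (r₁ := r₁) (r₂ := r₂)).Nondegenerate := by
  refine pairAmbForm_isSymm.isRefl.nondegenerate_iff_separatingLeft.mpr fun ξ hξ => ?_
  have h := hξ (ξ.1, star ξ.2)
  simp only [pairAmbForm_apply, pairAmb, Pi.star_apply, Complex.star_def, Complex.mul_conj,
    Complex.ofReal_re] at h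
  have hR_nonneg (i : Fin r₁) : 0 ≤ ξ.1 i * ξ.1 i := mul_self_nonneg _
  have hC_nonneg (j : Fin r₂) : 0 ≤ 2 * Complex.normSq (ξ.2 j) :=
    mul_nonneg zero_le_two (Complex.normSq_nonneg _)
  obtain ⟨hR, hC⟩ := (add_eq_zero_iff_of_nonneg (Finset.sum_nonneg fun i _ => hR_nonneg i)
    (Finset.sum_nonneg fun j _ => hC_nonneg j)).mp h
  rw [Finset.sum_eq_zero_iff_of_nonneg fun i _ => hR_nonneg i] at hR
  rw [Finset.sum_eq_zero_iff_of_nonneg fun j _ => hC_nonneg j] at hC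
  ext i
  · simpa using hR i (Finset.mem_univ i)
  · simpa using hC i (Finset.mem_univ i)

lemma mem_hatX_iff {Γ : AddSubgroup (Amb r₁ r₂)} {ξ : Amb r₁ r₂} :
    ξ ∈ hatX Γ ↔ ξ ∈ pairAmbForm.dualSubmodule Γ.toIntSubmodule := by
  simp only [hatX, BilinForm.mem_dualSubmodule, Submodule.mem_one, pairAmbForm_apply,
    algebraMap_int_eq, eq_intCast, eq_comm]
  rfl

lemma neg_mem_hatX {Γ : AddSubgroup (Amb r₁ r₂)} {ξ : Amb r₁ r₂} (h : ξ ∈ hatX Γ) :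
    -ξ ∈ hatX Γ :=
  mem_hatX_iff.mpr (neg_mem (mem_hatX_iff.mp h))

lemma mem_of_forall_mem_hatX (M : AddSubgroup (Amb r₁ r₂)) [DiscreteTopology M]
    (hM : Submodule.span ℝ (M : Set (Amb r₁ r₂)) = ⊤) {x : Amb r₁ r₂}
    (hx : ∀ ξ ∈ hatX M, ∃ m : ℤ, pairAmb ξ x = m) : x ∈ M := by
  have : DiscreteTopology M.toIntSubmodule := ‹DiscreteTopology M›
  have : IsZLattice ℝ M.toIntSubmodule := ⟨hM⟩
  change x ∈ M.toIntSubmodule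
  rw [← BilinForm.dualSubmodule_dualSubmodule_of_isZLattice
    pairAmbForm_nondegenerate pairAmbForm_isSymm M.toIntSubmodule]
  intro ξ hξ
  obtain ⟨m, hm⟩ := hx ξ (mem_hatX_iff.mpr hξ)
  exact Submodule.mem_one.mpr ⟨m, by simp [pairAmbForm_isSymm.eq x ξ, hm]⟩

end Pairing

section Multiplication

variable {K : Type} [Field K] {r₁ r₂ : ℕ} (σR : Fin r₁ → (K →+* ℝ)) (σC : Fin r₂ → (K →+* ℂ))

def mulKHom (θ : K) : Amb r₁ r₂ →+ Amb r₁ r₂ where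
  toFun := mulK σR σC θ
  map_zero' := by ext <;> simp [mulK]
  map_add' x y := by ext <;> simp [mulK, mul_add]

@[simp] lemma mulKHom_apply (θ : K) (x : Amb r₁ r₂) : mulKHom σR σC θ x = mulK σR σC θ x := rfl

lemma pairAmb_mulK (θ : K) (ξ x : Amb r₁ r₂) :
    pairAmb (mulK σR σC θ ξ) x = pairAmb ξ (mulK σR σC θ x) := by
  simp only [pairAmb, mulK, mul_assoc, mul_left_comm (ξ.1 _), mul_left_comm (ξ.2 _)]

def embKHom : K →+ Amb r₁ r₂ where
  toFun := embK σR σC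
  map_zero' := by ext <;> simp [embK]
  map_add' x y := by ext <;> simp [embK]

lemma mulK_embK (θ θ' : K) : mulK σR σC θ (embK σR σC θ') = embK σR σC (θ * θ') := by
  ext <;> simp [mulK, embK]

open NumberField

variable [NumberField K]

lemma mem_ringLat_iff {x : Amb r₁ r₂} :
    x ∈ ringLat σR σC ↔ ∃ a : 𝓞 K, embK σR σC (algebraMap (𝓞 K) K a) = x := by
  rw [ringLat, show (Set.range fun a : 𝓞 K => embK σR σC (algebraMap (𝓞 K) K a)) =
    ((embKHom σR σC).comp (algebraMap (𝓞 K) K).toAddMonoidHom).range from rfl,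
    AddSubgroup.closure_eq]
  rfl

lemma exists_zsmul_mulK_mem_ringLat (κ : K) :
    ∃ b : ℤ, b ≠ 0 ∧ ∀ x ∈ ringLat σR σC, b • mulK σR σC κ x ∈ ringLat σR σC := by
  obtain ⟨b, hb, hbκ⟩ := ((IsFractionRing.isAlgebraic_iff ℤ ℚ K).mpr
    (Algebra.IsAlgebraic.isAlgebraic κ)).exists_integral_multiple
  refine ⟨b, hb, fun x hx => ?_⟩
  obtain ⟨a, rfl⟩ := (mem_ringLat_iff σR σC).mp hx
  let bκ : 𝓞 K := (⟨b • κ, hbκ⟩ : integralClosure ℤ K)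
  refine (mem_ringLat_iff σR σC).mpr ⟨bκ * a, ?_⟩
  rw [mulK_embK]
  change _ = b • embKHom σR σC _
  rw [← map_zsmul, map_mul, ← smul_mul_assoc]
  rfl

end Multiplication

section Annihilator

open Pointwise

variable {K : Type} [Field K] {r₁ r₂ : ℕ} (σR : Fin r₁ → (K →+* ℝ)) (σC : Fin r₂ → (K →+* ℂ))
  (Γ : AddSubgroup (Amb r₁ r₂))

def annihSq (κ : Option K) : Set (Amb r₁ r₂ × Amb r₁ r₂) :=
  {x | ∀ ξ ∈ hatSq σR σC Γ κ, ∃ m : ℤ, pairAmb ξ.1 x.1 + pairAmb ξ.2 x.2 = m}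

lemma Tk_eq_image_annihSq (κ : Option K) :
    Tk σR σC Γ κ = QuotientAddGroup.mk '' annihSq σR σC Γ κ :=
  Set.ext fun _ => exists_congr fun _ => and_comm

lemma Vk_subset_annihSq (κ : Option K) : Vk σR σC κ ⊆ annihSq σR σC Γ κ := by
  intro v hv ξ hξ
  refine ⟨0, ?_⟩
  cases κ with
  | none =>
    rw [show v.1 = 0 from hv, hξ.2]
    simp [pairAmb]
  | some κ =>
    rw [show v.2 = mulK σR σC κ v.1 from hv, ← pairAmb_mulK, ← pairAmbForm_apply,
      ← pairAmbForm_apply, ← LinearMap.add_apply, ← map_add, hξ.2.2]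
    simp

lemma annihSq_none_subset_Vk_add [DiscreteTopology Γ]
    (hΓ : Submodule.span ℝ (Γ : Set (Amb r₁ r₂)) = ⊤) :
    annihSq σR σC Γ none ⊆ Vk σR σC none + Γ.prod Γ := by
  intro x hx
  have hx₁ : x.1 ∈ Γ := mem_of_forall_mem_hatX Γ hΓ fun ξ hξ => by
    simpa [pairAmb] using hx (ξ, 0) ⟨hξ, rfl⟩
  exact ⟨(0, x.2), rfl, (x.1, 0), ⟨hx₁, zero_mem Γ⟩, by simp⟩

/-- The dual of `Γ + κΓ` is `{ξ ∈ X̂ : κξ ∈ X̂}`, and `(-κξ, ξ)` pairs with `x` to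
`⟨ξ, x.2 - κ x.1⟩`. -/
lemma sub_mulK_mem_of_mem_annihSq {κ : K} [DiscreteTopology ↥(Γ ⊔ Γ.map (mulKHom σR σC κ))]
    (hΓ : Submodule.span ℝ (↑(Γ ⊔ Γ.map (mulKHom σR σC κ)) : Set (Amb r₁ r₂)) = ⊤)
    {x : Amb r₁ r₂ × Amb r₁ r₂} (hx : x ∈ annihSq σR σC Γ (some κ)) :
    x.2 - mulK σR σC κ x.1 ∈ Γ ⊔ Γ.map (mulKHom σR σC κ) := by
  refine mem_of_forall_mem_hatX _ hΓ fun ξ hξ => ?_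
  have hξΓ : ξ ∈ hatX Γ := fun γ hγ => hξ γ (AddSubgroup.mem_sup_left hγ)
  have hκξΓ : mulK σR σC κ ξ ∈ hatX Γ := fun γ hγ => by
    simpa [pairAmb_mulK] using hξ _ (AddSubgroup.mem_sup_right ⟨γ, hγ, rfl⟩)
  obtain ⟨m, hm⟩ := hx (-mulK σR σC κ ξ, ξ) ⟨neg_mem_hatX hκξΓ, hξΓ, neg_add_cancel _⟩
  refine ⟨m, ?_⟩
  rw [← hm]
  change pairAmbForm ξ (x.2 - mulK σR σC κ x.1) =
    pairAmbForm (-mulK σR σC κ ξ) x.1 + pairAmbForm ξ x.2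
  rw [map_sub, map_neg, LinearMap.neg_apply]
  simp only [pairAmbForm_apply, pairAmb_mulK]
  ring

lemma annihSq_some_subset_Vk_add [DiscreteTopology Γ]
    (hΓ : Submodule.span ℝ (Γ : Set (Amb r₁ r₂)) = ⊤) {κ : K} {c : ℤ} (hc : c ≠ 0)
    (hcκ : ∀ γ ∈ Γ, c • mulK σR σC κ γ ∈ Γ) :
    annihSq σR σC Γ (some κ) ⊆ Vk σR σC (some κ) + Γ.prod Γ := by
  intro x hx
  have : DiscreteTopology ↥(Γ ⊔ Γ.map (mulKHom σR σC κ)) := by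
    refine AddSubgroup.discreteTopology_of_zsmul_mem (Γ := Γ) hc fun m hm => ?_
    obtain ⟨γ₁, hγ₁, _, ⟨γ₂, hγ₂, rfl⟩, rfl⟩ := AddSubgroup.mem_sup.mp hm
    exact smul_add c γ₁ _ ▸ add_mem (zsmul_mem hγ₁ c) (hcκ γ₂ hγ₂)
  have hspan := top_unique (hΓ ▸ Submodule.span_mono (SetLike.coe_subset_coe.mpr
    (le_sup_left : Γ ≤ Γ ⊔ Γ.map (mulKHom σR σC κ))))
  obtain ⟨γ₁, hγ₁, _, ⟨γ₂, hγ₂, rfl⟩, hγ⟩ :=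
    AddSubgroup.mem_sup.mp (sub_mulK_mem_of_mem_annihSq σR σC Γ hspan hx)
  rw [mulKHom_apply, eq_sub_iff_add_eq] at hγ
  refine ⟨(x.1 + γ₂, mulK σR σC κ (x.1 + γ₂)), rfl, (-γ₂, γ₁),
    AddSubgroup.mem_prod.mpr ⟨Γ.neg_mem hγ₂, hγ₁⟩, Prod.ext (by simp) ?_⟩
  rw [← hγ, ← mulKHom_apply, map_add, mulKHom_apply, mulKHom_apply]
  simp only [Prod.snd_add]
  abel

end Annihilator

theorem Tk_eq_image_of_Vk_general
    {K : Type} [Field K] [NumberField K] (r₁ r₂ : ℕ)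
    (σR : Fin r₁ → (K →+* ℝ)) (σC : Fin r₂ → (K →+* ℂ))
    (Γ : AddSubgroup (Amb r₁ r₂))
    (hΓdisc : DiscreteTopology Γ)
    (hΓcocpt : CompactSpace (Amb r₁ r₂ ⧸ Γ))
    (hΓcomm₁ : Γ.relIndex (ringLat σR σC) ≠ 0)
    (hΓcomm₂ : (ringLat σR σC).relIndex Γ ≠ 0)
    :
    ∀ κ : Option K,
      Tk σR σC Γ κ =
        (fun v : Amb r₁ r₂ × Amb r₁ r₂ =>
          (QuotientAddGroup.mk v : (Amb r₁ r₂ × Amb r₁ r₂) ⧸ Γ.prod Γ)) '' Vk σR σC κ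
    := by
  have hspan := Γ.span_eq_top_of_compactSpace_quotient
  intro κ
  rw [Tk_eq_image_annihSq]
  refine QuotientAddGroup.image_mk_eq_of_subset_add (Vk_subset_annihSq σR σC Γ κ) ?_
  cases κ with
  | none => exact annihSq_none_subset_Vk_add σR σC Γ hspan
  | some κ =>
    obtain ⟨b, hb, hbκ⟩ := exists_zsmul_mulK_mem_ringLat σR σC κ
    obtain ⟨c, hc, hcκ⟩ := (mulKHom σR σC κ).exists_zsmul_map_mem_of_relIndex_ne_zero
      hΓcomm₁ hΓcomm₂ hb hbκ
    exact annihSq_some_subset_Vk_add σR σC Γ hspan hc hcκ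

theorem Tk_eq_image_of_Vk
    {K : Type} [Field K] [NumberField K] (r r₁ r₂ d : ℕ)
    (hr : r + 1 = r₁ + r₂) (hr2 : 2 ≤ r)
    (hd : Module.finrank ℚ K = d) (hd2 : r₁ + 2 * r₂ = d)
    (σR : Fin r₁ → (K →+* ℝ)) (σC : Fin r₂ → (K →+* ℂ))
    (hσR : Function.Injective σR) (hσC : Function.Injective σC)
    (hσCconj : ∀ j j' : Fin r₂, (starRingEnd ℂ).comp (σC j) ≠ σC j')
    (hCM : ¬(r₁ = 0 ∧ ∃ F : IntermediateField ℚ K, Module.finrank F K = 2 ∧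
        ∀ φ : F →+* ℂ, ∀ x : F, (φ x).im = 0))
    (Γ : AddSubgroup (Amb r₁ r₂))
    (hΓK : ∀ γ ∈ Γ, ∃ θ : K, embK σR σC θ = γ)
    (hΓdisc : DiscreteTopology Γ)
    (hΓcocpt : CompactSpace (Amb r₁ r₂ ⧸ Γ))
    (hΓcomm₁ : Γ.relIndex (ringLat σR σC) ≠ 0)
    (hΓcomm₂ : (ringLat σR σC).relIndex Γ ≠ 0)
    :
    ∀ κ : Option K,
      Tk σR σC Γ κ =
        (fun v : Amb r₁ r₂ × Amb r₁ r₂ =>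
          (QuotientAddGroup.mk v : (Amb r₁ r₂ × Amb r₁ r₂) ⧸ Γ.prod Γ)) '' Vk σR σC κ :=
  Tk_eq_image_of_Vk_general r₁ r₂ σR σC Γ hΓdisc hΓcocpt hΓcomm₁ hΓcomm₂

end
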